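/- Let T = Γ ⊢ α be a C-type whose right-hand side is a type variable α. If T is finally closed then FO(α, Γ) is nonempty. If in addition T is closed, then FO(α, Γ) has exactly one element (i, v), and v = (φ1→⋯→φm→α) ∧ v' for some m ≥ 0, types φ1,…,φm ∈ T_NF and v' ∈ U_C with α ∉ TV(v') (where v' may be ω, ω being the neutral element of ∧). -/
import Mathlib


set_option maxHeartbeats 1000000

namespace DBIT

/-- Terms of the λ_dB-calculus.  `var k` denotes the de Bruijn index `k+1`
(de Bruijn indices are *positive* natural numbers). -/
inductive Tm : Type
  | var : ℕ → Tm
  | app : Tm → Tm → Tm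
  | lam : Tm → Tm
deriving DecidableEq

/-- The set of free indices of a term. -/
def FI : Tm → Finset ℕ
  | .var k => {k + 1}
  | .app M N => FI M ∪ FI N
  | .lam M => ((FI M).filter (fun n => 1 < n)).image (fun n => n - 1)

/-- `supFI M` is the greatest free index of `M` (and `0` if `FI M = ∅`). -/
def supFI (M : Tm) : ℕ := (FI M).sup id

/-- Lift with cut-off: increment all indices that are free under `k` binders. -/
def liftRec (k : ℕ) : Tm → Tm
  | .var n => if k ≤ n then .var (n + 1) else .var n
  | .app M N => .app (liftRec k M) (liftRec k N)
  | .lam M => .lam (liftRec (k + 1) M)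

/-- The lift `M⁺` of `M`: increment all free indices by one. -/
def lift (M : Tm) : Tm := liftRec 0 M

/-- β-substitution: `subst k N M` is `{k+1 / N} M`. -/
def subst (k : ℕ) (N : Tm) : Tm → Tm
  | .app M1 M2 => .app (subst k N M1) (subst k N M2)
  | .lam M1 => .lam (subst (k + 1) (lift N) M1)
  | .var m => if k < m then .var (m - 1) else if m = k then N else .var m

/-- One-step β-reduction: the compatible closure of the β-contraction
`(λ.M) N →β {1/N} M`. -/
inductive Beta : Tm → Tm → Prop
  | beta (M N : Tm) : Beta (.app (.lam M) N) (subst 0 N M)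
  | appL {M M' : Tm} (N : Tm) : Beta M M' → Beta (.app M N) (.app M' N)
  | appR (M : Tm) {N N' : Tm} : Beta N N' → Beta (.app M N) (.app M N')
  | lam {M M' : Tm} : Beta M M' → Beta (.lam M) (.lam M')

/-- A term is a β-normal form when no β-reduction applies to it. -/
def IsNF (M : Tm) : Prop := ∀ N, ¬ Beta M N

/-- `appList h [N1, …, Nm] = (h N1 ⋯ Nm)`. -/
def appList (h : Tm) (Ns : List Tm) : Tm := Ns.foldl .app h

/-! ### Restricted intersection types -/

mutual
  /-- The set `T` of restricted intersection types: `τ ::= α | u → τ`. -/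
  inductive Ty : Type
    | tvar : ℕ → Ty
    | arr : IU → Ty → Ty
  /-- The set `U`: `u ::= ω | u ∧ u | τ`. -/
  inductive IU : Type
    | omega : IU
    | inter : IU → IU → IU
    | ofTy : Ty → IU
end

mutual
  /-- Equality of types in the quotient by commutativity/associativity of `∧`
  and neutrality of `ω`. -/
  inductive TyEq : Ty → Ty → Prop
    | refl (τ) : TyEq τ τ
    | symm {τ σ} : TyEq τ σ → TyEq σ τ
    | trans {τ σ ρ} : TyEq τ σ → TyEq σ ρ → TyEq τ ρ
    | arr {u v τ σ} : UEq u v → TyEq τ σ → TyEq (.arr u τ) (.arr v σ)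
  /-- Equality of `U`-elements in the quotient: `∧` is commutative, associative
  and has `ω` as neutral element. -/
  inductive UEq : IU → IU → Prop
    | refl (u) : UEq u u
    | symm {u v} : UEq u v → UEq v u
    | trans {u v w} : UEq u v → UEq v w → UEq u w
    | comm (u v) : UEq (.inter u v) (.inter v u)
    | assoc (u v w) : UEq (.inter (.inter u v) w) (.inter u (.inter v w))
    | omega_left (u) : UEq (.inter .omega u) u
    | inter {u u' v v'} : UEq u u' → UEq v v' → UEq (.inter u v) (.inter u' v')
    | ofTy {τ σ} : TyEq τ σ → UEq (.ofTy τ) (.ofTy σ)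
end

/-- Contexts: finite lists of elements of `U`. -/
abbrev Ctx := List IU

/-- Equality of contexts in the quotient (componentwise). -/
def CtxEq (Γ Δ : Ctx) : Prop := List.Forall₂ UEq Γ Δ

/-- The extension of `∧` to contexts (with `nil` neutral). -/
def ctxAnd : Ctx → Ctx → Ctx
  | [], Δ => Δ
  | u :: Γ, [] => u :: Γ
  | u :: Γ, v :: Δ => .inter u v :: ctxAnd Γ Δ

/-- `ω^n`: the context consisting of `n` copies of `ω`. -/
def omegas (n : ℕ) : Ctx := List.replicate n .omega

/-- `arrChain [σ1,…,σm] τ = σ1 → ⋯ → σm → τ`. -/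
def arrChain (σs : List Ty) (τ : Ty) : Ty := σs.foldr (fun σ t => .arr (.ofTy σ) t) τ

/-- `interOf [σ1,…,σn] = σ1 ∧ ⋯ ∧ σn` (and `ω` for the empty list). -/
def interOf : List Ty → IU
  | [] => .omega
  | σ :: σs => σs.foldl (fun u τ => .inter u (.ofTy τ)) (.ofTy σ)

mutual
  /-- Type variables occurring in a type. -/
  def tvT : Ty → Finset ℕ
    | .tvar a => {a}
    | .arr u τ => tvU u ∪ tvT τ
  /-- Type variables occurring in a `U`-element. -/
  def tvU : IU → Finset ℕ
    | .omega => ∅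
    | .inter u v => tvU u ∪ tvU v
    | .ofTy τ => tvT τ
end

/-- Type variables occurring in a context. -/
def tvC (Γ : Ctx) : Finset ℕ := Γ.foldr (fun u s => tvU u ∪ s) ∅

mutual
  /-- Application of a type substitution to a type. -/
  def substT (s : ℕ → Ty) : Ty → Ty
    | .tvar a => s a
    | .arr u τ => .arr (substU s u) (substT s τ)
  /-- Application of a type substitution to a `U`-element. -/
  def substU (s : ℕ → Ty) : IU → IU
    | .omega => .omega
    | .inter u v => .inter (substU s u) (substU s v)
    | .ofTy τ => .ofTy (substT s τ)
end

/-- Application of a type substitution to a context. -/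
def substC (s : ℕ → Ty) (Γ : Ctx) : Ctx := Γ.map (substU s)

/-! ### The typing systems SM and SM_r

Since types are quotiented by commutativity/associativity of `∧` and
neutrality of `ω`, the systems include a conversion rule for this
equality of types/contexts. -/

/-- The typing system `SM`.  Recall that `Tm.var k` is the de Bruijn index `k+1`. -/
inductive SM : Tm → Ctx → Ty → Prop
  | var (τ : Ty) : SM (.var 0) [.ofTy τ] τ
  | varn {k Γ τ} : SM (.var k) Γ τ → SM (.var (k + 1)) (.omega :: Γ) τ
  | arrI {M u Γ τ} : SM M (u :: Γ) τ → SM (.lam M) Γ (.arr u τ)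
  | arrI' {M τ} : SM M [] τ → SM (.lam M) [] (.arr .omega τ)
  | arrE' {M1 M2 Γ Δ τ σ} : SM M1 Γ (.arr .omega τ) → SM M2 Δ σ →
      SM (.app M1 M2) (ctxAnd Γ Δ) τ
  | arrE {M1 M2 : Tm} {Γ : Ctx} {τ : Ty} (σs : List Ty) (Δs : List Ctx)
      (hne : σs ≠ []) (hlen : Δs.length = σs.length)
      (h1 : SM M1 Γ (.arr (interOf σs) τ))
      (h2 : ∀ i, i < σs.length → SM M2 (Δs.getD i []) (σs.getD i (.tvar 0))) :
      SM (.app M1 M2) (Δs.foldl ctxAnd Γ) τ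
  | conv {M Γ Γ' τ τ'} : SM M Γ τ → CtxEq Γ Γ' → TyEq τ τ' → SM M Γ' τ'

/-- The typing system `SM_r`: as `SM` but with rule (var) replaced by (var_r). -/
inductive SMr : Tm → Ctx → Ty → Prop
  | varr (σs : List Ty) (a : ℕ) :
      SMr (.var 0) [.ofTy (arrChain σs (.tvar a))] (arrChain σs (.tvar a))
  | varn {k Γ τ} : SMr (.var k) Γ τ → SMr (.var (k + 1)) (.omega :: Γ) τ
  | arrI {M u Γ τ} : SMr M (u :: Γ) τ → SMr (.lam M) Γ (.arr u τ)
  | arrI' {M τ} : SMr M [] τ → SMr (.lam M) [] (.arr .omega τ)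
  | arrE' {M1 M2 Γ Δ τ σ} : SMr M1 Γ (.arr .omega τ) → SMr M2 Δ σ →
      SMr (.app M1 M2) (ctxAnd Γ Δ) τ
  | arrE {M1 M2 : Tm} {Γ : Ctx} {τ : Ty} (σs : List Ty) (Δs : List Ctx)
      (hne : σs ≠ []) (hlen : Δs.length = σs.length)
      (h1 : SMr M1 Γ (.arr (interOf σs) τ))
      (h2 : ∀ i, i < σs.length → SMr M2 (Δs.getD i []) (σs.getD i (.tvar 0))) :
      SMr (.app M1 M2) (Δs.foldl ctxAnd Γ) τ
  | conv {M Γ Γ' τ τ'} : SMr M Γ τ → CtxEq Γ Γ' → TyEq τ τ' → SMr M Γ' τ'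

/-- The type variables of a typing (pair context/type). -/
def tvP (Γ : Ctx) (τ : Ty) : Finset ℕ := tvC Γ ∪ tvT τ

/-- The type-inference algorithm `Infer` for β-normal forms, as a relation
(the algorithm is nondeterministic in the choice of the fresh type variables;
freshness is expressed by the disjointness side conditions). -/
inductive InferR : Tm → Ctx → Ty → Prop
  | var (k a : ℕ) : InferR (.var k) (omegas k ++ [.ofTy (.tvar a)]) (.tvar a)
  | lamCons {N : Tm} {u : IU} {Γ : Ctx} {σ : Ty} :
      InferR N (u :: Γ) σ → InferR (.lam N) Γ (.arr u σ)
  | lamNil {N : Tm} {σ : Ty} :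
      InferR N [] σ → InferR (.lam N) [] (.arr .omega σ)
  | app (k : ℕ) (Ns : List Tm) (Γs : List Ctx) (σs : List Ty) (a : ℕ)
      (hne : Ns ≠ [])
      (hlen1 : Γs.length = Ns.length) (hlen2 : σs.length = Ns.length)
      (h : ∀ i, i < Ns.length →
        InferR (Ns.getD i (.var 0)) (Γs.getD i []) (σs.getD i (.tvar 0)))
      (hdisj : ∀ i j, i < Ns.length → j < Ns.length → i ≠ j →
        Disjoint (tvP (Γs.getD i []) (σs.getD i (.tvar 0)))
                 (tvP (Γs.getD j []) (σs.getD j (.tvar 0))))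
      (ha : ∀ i, i < Ns.length → a ∉ tvP (Γs.getD i []) (σs.getD i (.tvar 0))) :
      InferR (appList (.var k) Ns)
        (Γs.foldl ctxAnd (omegas k ++ [.ofTy (arrChain σs (.tvar a))]))
        (.tvar a)

/-! ### The subsets T_C, T_NF, U_C and C-types -/

mutual
  /-- `ρ ∈ T_C ::= α | φ→ρ` with `φ ∈ T_NF`. -/
  inductive IsTC : Ty → Prop
    | tvar (a : ℕ) : IsTC (.tvar a)
    | arr {φ ρ} : IsTNF φ → IsTC ρ → IsTC (.arr (.ofTy φ) ρ)
  /-- `φ ∈ T_NF ::= α | v→φ` with `v ∈ U_C`. -/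
  inductive IsTNF : Ty → Prop
    | tvar (a : ℕ) : IsTNF (.tvar a)
    | arr {v φ} : IsUC v → IsTNF φ → IsTNF (.arr v φ)
  /-- `v ∈ U_C ::= ω | v∧v | ρ` with `ρ ∈ T_C`. -/
  inductive IsUC : IU → Prop
    | omega : IsUC .omega
    | inter {u v} : IsUC u → IsUC v → IsUC (.inter u v)
    | ofTy {ρ} : IsTC ρ → IsUC (.ofTy ρ)
end

/-- `Γ ∈ C`: all elements of `Γ` lie in `U_C`. -/
def IsCCtx (Γ : Ctx) : Prop := ∀ u ∈ Γ, IsUC u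

/-- C-types: `tj Γ φ` is `Γ ⊢ φ` and `cj Δ` is `Δ ⊢`. -/
inductive CTy : Type
  | tj : Ctx → Ty → CTy
  | cj : Ctx → CTy

mutual
  /-- Number of positive occurrences of the variable `a` in a type. -/
  def posT : Ty → ℕ → ℕ
    | .tvar b, a => if b = a then 1 else 0
    | .arr u τ, a => negU u a + posT τ a
  /-- Number of negative occurrences of the variable `a` in a type. -/
  def negT : Ty → ℕ → ℕ
    | .tvar _, _ => 0
    | .arr u τ, a => posU u a + negT τ a
  /-- Number of positive occurrences of the variable `a` in a `U`-element. -/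
  def posU : IU → ℕ → ℕ
    | .omega, _ => 0
    | .inter u v, a => posU u a + posU v a
    | .ofTy τ, a => posT τ a
  /-- Number of negative occurrences of the variable `a` in a `U`-element. -/
  def negU : IU → ℕ → ℕ
    | .omega, _ => 0
    | .inter u v, a => negU u a + negU v a
    | .ofTy τ, a => negT τ a
end

/-- Positive occurrences in a context. -/
def posC (Γ : Ctx) (a : ℕ) : ℕ := (Γ.map (fun u => posU u a)).sum
/-- Negative occurrences in a context. -/
def negC (Γ : Ctx) (a : ℕ) : ℕ := (Γ.map (fun u => negU u a)).sum

/-- Positive occurrences of a variable in a C-type (polarity is flipped in the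
context part). -/
def posCT : CTy → ℕ → ℕ
  | .tj Γ φ, a => negC Γ a + posT φ a
  | .cj Γ, a => negC Γ a

/-- Negative occurrences of a variable in a C-type. -/
def negCT : CTy → ℕ → ℕ
  | .tj Γ φ, a => posC Γ a + negT φ a
  | .cj Γ, a => posC Γ a

/-- Type variables of a C-type. -/
def tvCT : CTy → Finset ℕ
  | .tj Γ φ => tvC Γ ∪ tvT φ
  | .cj Γ => tvC Γ

/-- A C-type is closed when each of its type variables has exactly one positive
and exactly one negative occurrence. -/
def IsClosed (T : CTy) : Prop := ∀ a ∈ tvCT T, posCT T a = 1 ∧ negCT T a = 1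

/-- The final (rightmost) type-variable occurrence of a type. -/
def finalT : Ty → ℕ
  | .tvar a => a
  | .arr _ φ => finalT φ

/-- The final (rightmost) type-variable occurrence of a `U`-element, if any. -/
def finalU : IU → Option ℕ
  | .omega => none
  | .inter u v => (finalU v).orElse (fun _ => finalU u)
  | .ofTy τ => some (finalT τ)

/-- Left subtypes of a type. -/
def Lty : Ty → Set IU
  | .tvar _ => ∅
  | .arr .omega φ => Lty φ
  | .arr v φ => insert v (Lty φ)

/-- Left subtypes of a context. -/
def Lctx : Ctx → Set IU
  | [] => ∅
  | .omega :: Γ => Lctx Γ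
  | v :: Γ => insert v (Lctx Γ)

/-- The set `L(T)` of left subtypes of a C-type. -/
def LCT : CTy → Set IU
  | .tj Γ φ => Lctx Γ ∪ Lty φ
  | .cj Γ => Lctx Γ

/-- A C-type `Γ ⊢ φ` is finally closed when the final occurrence of `φ` is
also the final occurrence of some type in `L(T)`. -/
def IsFC : CTy → Prop
  | .tj Γ φ => ∃ v ∈ LCT (.tj Γ φ), finalU v = some (finalT φ)
  | .cj _ => False

/-- Equality of C-types in the quotient. -/
def CTyEq : CTy → CTy → Prop
  | .tj Γ φ, .tj Δ ψ => CtxEq Γ Δ ∧ TyEq φ ψ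
  | .cj Γ, .cj Δ => CtxEq Γ Δ
  | _, _ => False

/-- `Γ` contains an element which is not (equal to) `ω`, i.e. `Γ` is not of the
form `ω^n` with `n ≥ 1` (nor `nil`). -/
def hasNonOmega (Γ : Ctx) : Prop := ∃ u ∈ Γ, ¬ UEq u .omega

/-- `Held T' T`: the C-type `T'` is held in `T = Γ ⊢ φ`, i.e. `T' = Γ' ⊢` or
`T' = Γ' ⊢ φ` with `Γ = Γ' ∧ Δ` for some context `Δ`, where `Γ'` is not of the
form `ω^n` (`Γ'` may be `nil` in the second case). -/
inductive Held : CTy → CTy → Prop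
  | cj {Γ' Δ Γ : Ctx} {φ : Ty} (hC : IsCCtx Γ') (hne : Γ' ≠ [])
      (hω : hasNonOmega Γ') (h : CtxEq Γ (ctxAnd Γ' Δ)) :
      Held (.cj Γ') (.tj Γ φ)
  | tj {Γ' Δ Γ : Ctx} {φ : Ty} (hC : IsCCtx Γ')
      (hω : Γ' = [] ∨ hasNonOmega Γ') (h : CtxEq Γ (ctxAnd Γ' Δ)) :
      Held (.tj Γ' φ) (.tj Γ φ)

/-- `T'` is strictly held in `T`. -/
def StrictlyHeld (T' T : CTy) : Prop := Held T' T ∧ ¬ CTyEq T' T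

/-- A C-type is minimally closed when no closed C-type is strictly held in it. -/
def IsMC (T : CTy) : Prop := ¬ ∃ T', StrictlyHeld T' T ∧ IsClosed T'

/-- A C-type is complete when it is closed, finally closed and minimally closed. -/
def IsComplete (T : CTy) : Prop := IsClosed T ∧ IsFC T ∧ IsMC T

/-- Principal C-types (Definition of principal). -/
inductive Principal : CTy → Prop
  | var (k a : ℕ)
      (hcomp : IsComplete (.tj (omegas k ++ [.ofTy (.tvar a)]) (.tvar a))) :
      Principal (.tj (omegas k ++ [.ofTy (.tvar a)]) (.tvar a))
  | lamNil {φ : Ty} (hcomp : IsComplete (.tj [] (.arr .omega φ)))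
      (hp : Principal (.tj [] φ)) :
      Principal (.tj [] (.arr .omega φ))
  | lam {Γ : Ctx} {v : IU} {φ : Ty} (hcomp : IsComplete (.tj Γ (.arr v φ)))
      (hcond : Γ ≠ [] ∨ ¬ UEq v .omega)
      (hp : Principal (.tj (v :: Γ) φ)) :
      Principal (.tj Γ (.arr v φ))
  | app {Γ : Ctx} {a : ℕ} (k : ℕ) (Γs : List Ctx) (φs : List Ty)
      (hcomp : IsComplete (.tj Γ (.tvar a)))
      (hne : φs ≠ []) (hlen : Γs.length = φs.length)
      (hC : ∀ Δ ∈ Γs, IsCCtx Δ)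
      (hΓ : CtxEq Γ (Γs.foldl ctxAnd (omegas k ++ [.ofTy (arrChain φs (.tvar a))])))
      (hp : ∀ i, i < φs.length →
        Principal (.tj (Γs.getD i []) (φs.getD i (.tvar 0)))) :
      Principal (.tj Γ (.tvar a))

/-- `FO(α, Γ)`: the set of pairs `(i, Γ_i)` (1-indexed) such that `α` is the
final occurrence of `Γ_i`. -/
def FO (a : ℕ) (Γ : Ctx) : Set (ℕ × IU) :=
  {p | 1 ≤ p.1 ∧ p.1 ≤ Γ.length ∧ p.2 = Γ.getD (p.1 - 1) .omega ∧
       finalU p.2 = some a}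

/-! ### Auxiliary lemmas for Statement 18 -/

mutual
  theorem mem_tvT_pos : ∀ (τ : Ty) (a : ℕ), a ∈ tvT τ → 1 ≤ posT τ a + negT τ a
    | .tvar b, a, h => by
        simp [tvT] at h
        simp [posT, negT, h]
    | .arr u τ, a, h => by
        simp [tvT] at h
        rcases h with h | h
        · have := mem_tvU_pos u a h
          simp [posT, negT]; omega
        · have := mem_tvT_pos τ a h
          simp [posT, negT]; omega
  theorem mem_tvU_pos : ∀ (u : IU) (a : ℕ), a ∈ tvU u → 1 ≤ posU u a + negU u a
    | .omega, a, h => by simp [tvU] at h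
    | .inter u v, a, h => by
        simp [tvU] at h
        rcases h with h | h
        · have := mem_tvU_pos u a h
          simp [posU, negU]; omega
        · have := mem_tvU_pos v a h
          simp [posU, negU]; omega
    | .ofTy τ, a, h => by
        have := mem_tvT_pos τ a (by simpa [tvU] using h)
        simpa [posU, negU] using this
end

theorem not_mem_tvU {u : IU} {a : ℕ} (h1 : posU u a = 0) (h2 : negU u a = 0) :
    a ∉ tvU u := fun h => by have := mem_tvU_pos u a h; omega

theorem finalT_pos : ∀ (τ : Ty), 1 ≤ posT τ (finalT τ)
  | .tvar a => by simp [posT, finalT]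
  | .arr u τ => by
      have := finalT_pos τ
      simp [posT, finalT]; omega

theorem finalU_pos : ∀ (v : IU) (a : ℕ), finalU v = some a → 1 ≤ posU v a
  | .omega, a, h => by simp [finalU] at h
  | .inter u w, a, h => by
      cases hw : finalU w with
      | none =>
          simp [finalU, hw, Option.orElse] at h
          have := finalU_pos u a h
          simp [posU]; omega
      | some b =>
          have hba : b = a := by simpa [finalU, hw, Option.orElse] using h
          have := finalU_pos w b hw
          rw [hba] at this
          simp [posU]; omega
  | .ofTy τ, a, h => by
      simp [finalU] at h
      subst h
      simpa [posU] using finalT_pos τ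

theorem tc_struct : ∀ (ρ : Ty), IsTC ρ →
    ∃ φs : List Ty, (∀ φ ∈ φs, IsTNF φ) ∧ ρ = arrChain φs (.tvar (finalT ρ))
  | .tvar b, _ => ⟨[], by simp, by simp [arrChain, finalT]⟩
  | .arr u τ, h => by
      cases h with
      | arr hφ hρ =>
        obtain ⟨φs, h1, h2⟩ := tc_struct τ hρ
        rename_i φ
        refine ⟨φ :: φs, ?_, ?_⟩
        · intro ψ hψ
          rcases List.mem_cons.mp hψ with rfl | hψ
          · exact hφ
          · exact h1 ψ hψ
        · simp only [arrChain, List.foldr_cons, finalT]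
          rw [← arrChain, ← h2]

theorem uc_struct : ∀ (v : IU) (a : ℕ), IsUC v → finalU v = some a →
    posU v a ≤ 1 → negU v a = 0 →
    ∃ (φs : List Ty) (v' : IU), (∀ φ ∈ φs, IsTNF φ) ∧ IsUC v' ∧
      UEq v (.inter (.ofTy (arrChain φs (.tvar a))) v') ∧ a ∉ tvU v'
  | .omega, a, _, hf, _, _ => by simp [finalU] at hf
  | .inter u w, a, hUC, hf, hp, hn => by
      have hpu : posU (.inter u w) a = posU u a + posU w a := by simp [posU]
      have hnu : negU (.inter u w) a = negU u a + negU w a := by simp [negU]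
      cases hUC with
      | inter hu hw =>
        cases hfw : finalU w with
        | some b =>
          have hba : b = a := by simpa [finalU, hfw, Option.orElse] using hf
          rw [hba] at hfw
          have hw1 := finalU_pos w a hfw
          obtain ⟨φs, w', hφs, hw', heq, hnm⟩ :=
            uc_struct w a hw hfw (by omega) (by omega)
          refine ⟨φs, .inter w' u, hφs, .inter hw' hu, ?_, ?_⟩
          · have e1 : UEq (.inter u w)
                (.inter u (.inter (.ofTy (arrChain φs (.tvar a))) w')) :=
              UEq.inter (UEq.refl u) heq
            have e2 : UEq (.inter u (.inter (.ofTy (arrChain φs (.tvar a))) w'))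
                (.inter (.inter (.ofTy (arrChain φs (.tvar a))) w') u) :=
              UEq.comm _ _
            exact (e1.trans e2).trans (UEq.assoc _ _ _)
          · have hu0 : a ∉ tvU u := not_mem_tvU (by omega) (by omega)
            simp [tvU]
            exact ⟨hnm, hu0⟩
        | none =>
          simp [finalU, hfw, Option.orElse] at hf
          have hu1 := finalU_pos u a hf
          obtain ⟨φs, u', hφs, hu', heq, hnm⟩ :=
            uc_struct u a hu hf (by omega) (by omega)
          refine ⟨φs, .inter u' w, hφs, .inter hu' hw, ?_, ?_⟩
          · have e1 : UEq (.inter u w)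
                (.inter (.inter (.ofTy (arrChain φs (.tvar a))) u') w) :=
              UEq.inter heq (UEq.refl w)
            exact e1.trans (UEq.assoc _ _ _)
          · have hw0 : a ∉ tvU w := not_mem_tvU (by omega) (by omega)
            simp [tvU]
            exact ⟨hnm, hw0⟩
  | .ofTy ρ, a, hUC, hf, _, _ => by
      cases hUC with
      | ofTy hTC =>
        obtain ⟨φs, h1, h2⟩ := tc_struct ρ hTC
        simp [finalU] at hf
        rw [hf] at h2
        refine ⟨φs, .omega, h1, .omega, ?_, by simp [tvU]⟩
        rw [← h2]
        exact ((UEq.comm _ _).trans (UEq.omega_left _)).symm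

theorem getD_le_sum : ∀ (l : List ℕ) (i : ℕ), l.getD i 0 ≤ l.sum
  | [], i => by simp
  | x :: xs, 0 => by simp
  | x :: xs, i + 1 => by
      have := getD_le_sum xs i
      rw [List.getD_cons_succ, List.sum_cons]; omega

theorem sum_two : ∀ (l : List ℕ) (i j : ℕ), i ≠ j → i < l.length → j < l.length →
    1 ≤ l.getD i 0 → 1 ≤ l.getD j 0 → 2 ≤ l.sum
  | [], i, j, _, hi, _, _, _ => by simp at hi
  | x :: xs, 0, 0, hij, _, _, _, _ => absurd rfl hij
  | x :: xs, 0, j + 1, _, _, hj, h1, h2 => by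
      simp only [List.getD_cons_zero] at h1
      have := getD_le_sum xs j
      rw [List.getD_cons_succ] at h2
      rw [List.sum_cons]; omega
  | x :: xs, i + 1, 0, _, hi, _, h1, h2 => by
      simp only [List.getD_cons_zero] at h2
      have := getD_le_sum xs i
      rw [List.getD_cons_succ] at h1
      rw [List.sum_cons]; omega
  | x :: xs, i + 1, j + 1, hij, hi, hj, h1, h2 => by
      rw [List.getD_cons_succ] at h1 h2
      have := sum_two xs i j (by omega) (by simpa using hi) (by simpa using hj) h1 h2
      rw [List.sum_cons]; omega

theorem entry_le_posC {Γ : Ctx} {i : ℕ} (hi : i < Γ.length) (a : ℕ) :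
    posU (Γ.getD i .omega) a ≤ posC Γ a := by
  have h1 : (Γ.map (fun u => posU u a)).getD i 0 ≤ posC Γ a :=
    getD_le_sum _ i
  rwa [List.getD_eq_getElem _ _ (by simpa using hi), List.getElem_map,
    ← List.getD_eq_getElem _ _ hi] at h1

theorem entry_le_negC {Γ : Ctx} {i : ℕ} (hi : i < Γ.length) (a : ℕ) :
    negU (Γ.getD i .omega) a ≤ negC Γ a := by
  have h1 : (Γ.map (fun u => negU u a)).getD i 0 ≤ negC Γ a :=
    getD_le_sum _ i
  rwa [List.getD_eq_getElem _ _ (by simpa using hi), List.getElem_map,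
    ← List.getD_eq_getElem _ _ hi] at h1

theorem lctx_index : ∀ (Γ : Ctx) (v : IU), v ∈ Lctx Γ →
    ∃ i, i < Γ.length ∧ Γ.getD i .omega = v := by
  intro Γ
  induction Γ with
  | nil => intro v hv; simp [Lctx] at hv
  | cons u Γ ih =>
    intro v hv
    match u with
    | .omega =>
        obtain ⟨i, h1, h2⟩ := ih v (by simpa [Lctx] using hv)
        exact ⟨i + 1, by simpa using h1, by simpa using h2⟩
    | .inter x y =>
        simp only [Lctx, Set.mem_insert_iff] at hv
        rcases hv with rfl | hv
        · exact ⟨0, by simp, by simp⟩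
        · obtain ⟨i, h1, h2⟩ := ih v hv
          exact ⟨i + 1, by simpa using h1, by simpa using h2⟩
    | .ofTy τ =>
        simp only [Lctx, Set.mem_insert_iff] at hv
        rcases hv with rfl | hv
        · exact ⟨0, by simp, by simp⟩
        · obtain ⟨i, h1, h2⟩ := ih v hv
          exact ⟨i + 1, by simpa using h1, by simpa using h2⟩

theorem fc_index {Γ : Ctx} {a : ℕ} (hFC : IsFC (.tj Γ (.tvar a))) :
    ∃ i, i < Γ.length ∧ finalU (Γ.getD i .omega) = some a := by
  obtain ⟨v, hv, hfin⟩ := hFC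
  simp only [LCT, Lty, Set.union_empty, Set.mem_union, Set.mem_empty_iff_false,
    or_false] at hv
  obtain ⟨i, h1, h2⟩ := lctx_index Γ v hv
  exact ⟨i, h1, by rw [h2]; simpa [finalT] using hfin⟩

/-- structure of `FO(α, Γ)` for finally closed/closed C-types. -/
theorem fo_structure {Γ : Ctx} {a : ℕ} (hC : IsCCtx Γ) :
    (IsFC (.tj Γ (.tvar a)) → (FO a Γ).Nonempty) ∧
    (IsFC (.tj Γ (.tvar a)) → IsClosed (.tj Γ (.tvar a)) →
      ∃ p : ℕ × IU, FO a Γ = {p} ∧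
        ∃ (φs : List Ty) (v' : IU), (∀ φ ∈ φs, IsTNF φ) ∧ IsUC v' ∧
          UEq p.2 (.inter (.ofTy (arrChain φs (.tvar a))) v') ∧
          a ∉ tvU v') := by
  constructor
  · intro hFC
    obtain ⟨i, hi, hfin⟩ := fc_index hFC
    exact ⟨(i + 1, Γ.getD i .omega), by omega, by omega, rfl, hfin⟩
  · intro hFC hClosed
    obtain ⟨i, hi, hfin⟩ := fc_index hFC
    have hmemCT : a ∈ tvCT (.tj Γ (.tvar a)) := by simp [tvCT, tvT]
    obtain ⟨hpos, hneg⟩ := hClosed a hmemCT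
    have hnegC : negC Γ a = 0 := by
      simp [posCT, posT] at hpos; omega
    have hposC : posC Γ a = 1 := by
      simp [negCT, negT] at hneg; omega
    set v := Γ.getD i .omega with hv
    have hvmem : v ∈ Γ := by
      rw [hv, List.getD_eq_getElem _ _ hi]
      exact List.getElem_mem hi
    have hUC := hC v hvmem
    have hple : posU v a ≤ 1 := hposC ▸ entry_le_posC hi a
    have hnle : negU v a = 0 :=
      Nat.le_zero.mp (hnegC ▸ entry_le_negC hi a)
    refine ⟨(i + 1, v), ?_, ?_⟩
    · ext ⟨j, w⟩
      simp only [FO, Set.mem_setOf_eq, Set.mem_singleton_iff, Prod.mk.injEq]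
      constructor
      · rintro ⟨hj1, hj2, hw, hfw⟩
        have hj : j - 1 = i := by
          by_contra hne
          have h1 : 1 ≤ posU (Γ.getD (j - 1) .omega) a :=
            finalU_pos _ _ (hw ▸ hfw)
          have h2 : 1 ≤ posU (Γ.getD i .omega) a := finalU_pos _ _ hfin
          have hjlt : j - 1 < Γ.length := by omega
          have g1 : 1 ≤ (Γ.map (fun u => posU u a)).getD (j - 1) 0 := by
            rwa [List.getD_eq_getElem _ _ (by simpa using hjlt),
              List.getElem_map, ← List.getD_eq_getElem _ _ hjlt]
          have g2 : 1 ≤ (Γ.map (fun u => posU u a)).getD i 0 := by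
            rwa [List.getD_eq_getElem _ _ (by simpa using hi),
              List.getElem_map, ← List.getD_eq_getElem _ _ hi]
          have := sum_two (Γ.map (fun u => posU u a)) (j - 1) i hne
            (by simpa using hjlt) (by simpa using hi) g1 g2
          have : 2 ≤ posC Γ a := this
          omega
        constructor
        · omega
        · rw [hw, hj]
      · rintro ⟨rfl, rfl⟩
        exact ⟨by omega, by omega, rfl, hfin⟩
    · obtain ⟨φs, v', hφs, hv', heq, hnm⟩ := uc_struct v a hUC hfin hple hnle
      exact ⟨φs, v', hφs, hv', heq, hnm⟩

end DBIT
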